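/- Let (X,d) be a compact metric space and F = {f₁,…,f_k} a finite family of continuous surjective self-maps of X, with iterates ω_n as below and f = f_k∘f_{k-1}∘⋯∘f₁. If x,y ∈ X form a δ-scrambled pair for the non-autonomous system (X,F) for some δ>0 (i.e., liminf_{n→∞} d(ω_n(x),ω_n(y)) = 0 and limsup_{n→∞} d(ω_n(x),ω_n(y)) > δ), then there exists η>0 such that (x,y) is an η-scrambled pair for the autonomous system (X,f) (i.e., liminf_{n→∞} d(fⁿ(x),fⁿ(y)) = 0 and limsup_{n→∞} d(fⁿ(x),fⁿ(y)) > η). -/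
import Mathlib


open Filter Metric Set Function

/-- The `n`-th iterate `ω_n` of the non-autonomous system generated by the finite family
`f 0, f 1, …, f k` applied cyclically: `ω_0 = id` and `ω_{n+1} = f (n % (k+1)) ∘ ω_n`,
so that `ω_n = f_{((n-1) mod (k+1)) + 1} ∘ ⋯ ∘ f_2 ∘ f_1` in the paper's (1-based) notation.
The induced autonomous map `f = f_k ∘ ⋯ ∘ f_1` is `omegaIt f (k+1)`. -/
def omegaIt {X : Type*} {k : ℕ} (f : Fin (k + 1) → X → X) : ℕ → X → X
  | 0 => id
  | n + 1 => fun x => f ⟨n % (k + 1), Nat.mod_lt _ (Nat.succ_pos k)⟩ (omegaIt f n x)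

/-- `j` steps of the non-autonomous system, starting at step index `a`. -/
def omegaFrom {X : Type*} {k : ℕ} (f : Fin (k + 1) → X → X) : ℕ → ℕ → X → X
  | _, 0 => id
  | a, j + 1 => fun x =>
      f ⟨(a + j) % (k + 1), Nat.mod_lt _ (Nat.succ_pos k)⟩ (omegaFrom f a j x)

lemma omegaFrom_zero {X : Type*} {k : ℕ} (f : Fin (k + 1) → X → X) (j : ℕ) :
    omegaFrom f 0 j = omegaIt f j := by
  induction j with
  | zero => rfl
  | succ j ih => funext x; simp [omegaFrom, omegaIt, ih]

lemma omegaIt_add {X : Type*} {k : ℕ} (f : Fin (k + 1) → X → X) (n j : ℕ) (x : X) :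
    omegaIt f (n + j) x = omegaFrom f n j (omegaIt f n x) := by
  induction j with
  | zero => rfl
  | succ j ih => simp [omegaIt, omegaFrom, ih, ← Nat.add_assoc]

lemma omegaFrom_mod {X : Type*} {k : ℕ} (f : Fin (k + 1) → X → X) (a j : ℕ) :
    omegaFrom f a j = omegaFrom f (a % (k + 1)) j := by
  induction j with
  | zero => rfl
  | succ j ih => funext x; simp [omegaFrom, ih, Nat.mod_add_mod]

lemma continuous_omegaFrom {X : Type*} [TopologicalSpace X] {k : ℕ}
    {f : Fin (k + 1) → X → X} (hc : ∀ i, Continuous (f i)) (a j : ℕ) :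
    Continuous (omegaFrom f a j) := by
  induction j with
  | zero => exact continuous_id
  | succ j ih => exact (hc _).comp ih

lemma continuous_omegaIt {X : Type*} [TopologicalSpace X] {k : ℕ}
    {f : Fin (k + 1) → X → X} (hc : ∀ i, Continuous (f i)) (j : ℕ) :
    Continuous (omegaIt f j) := by
  rw [← omegaFrom_zero]; exact continuous_omegaFrom hc 0 j

lemma omegaIt_mul {X : Type*} {k : ℕ} (f : Fin (k + 1) → X → X) (m : ℕ) (x : X) :
    (omegaIt f (k + 1))^[m] x = omegaIt f ((k + 1) * m) x := by
  induction m with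
  | zero => rfl
  | succ m ih =>
    have h : (k + 1) * (m + 1) = (k + 1) * m + (k + 1) := by ring
    rw [h, omegaIt_add, omegaFrom_mod, Nat.mul_mod_right, omegaFrom_zero,
      Function.iterate_succ_apply', ih]

lemma omegaIt_decomp {X : Type*} {k : ℕ} (f : Fin (k + 1) → X → X) (n : ℕ) (x : X) :
    omegaIt f n x = omegaIt f (n % (k + 1)) ((omegaIt f (k + 1))^[n / (k + 1)] x) := by
  conv_lhs => rw [← Nat.div_add_mod n (k + 1)]
  rw [omegaIt_add, omegaFrom_mod, Nat.mul_mod_right, omegaFrom_zero, omegaIt_mul]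

lemma omegaIt_complete {X : Type*} {k : ℕ} (f : Fin (k + 1) → X → X) (n : ℕ) (x : X) :
    (omegaIt f (k + 1))^[n / (k + 1) + 1] x
      = omegaFrom f (n % (k + 1)) (k + 1 - n % (k + 1)) (omegaIt f n x) := by
  have hr : n % (k + 1) < k + 1 := Nat.mod_lt _ (Nat.succ_pos k)
  have hd : (k + 1) * (n / (k + 1)) + n % (k + 1) = n := Nat.div_add_mod n (k + 1)
  have h : (k + 1) * (n / (k + 1) + 1) = n + (k + 1 - n % (k + 1)) := by
    rw [Nat.mul_add, Nat.mul_one]; omega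
  rw [omegaIt_mul, h, omegaIt_add, omegaFrom_mod f n]

/-- Uniform continuity for a finite family of maps, with a common modulus. -/
lemma unif_family {X : Type*} [MetricSpace X] [CompactSpace X] {k : ℕ}
    (G : Fin (k + 1) → X → X) (hG : ∀ r, Continuous (G r)) {ε : ℝ} (hε : 0 < ε) :
    ∃ η > (0 : ℝ), ∀ r a b, dist a b < η → dist (G r a) (G r b) < ε := by
  have h : ∀ r : Fin (k + 1), ∃ η > (0 : ℝ),
      ∀ a b : X, dist a b < η → dist (G r a) (G r b) < ε := by
    intro r
    have hu := CompactSpace.uniformContinuous_of_continuous (hG r)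
    obtain ⟨η, hη, hmain⟩ := Metric.uniformContinuous_iff.mp hu ε hε
    exact ⟨η, hη, fun a b hab => hmain hab⟩
  choose η hη hmain using h
  refine ⟨Finset.univ.inf' ⟨0, Finset.mem_univ _⟩ η, ?_, ?_⟩
  · exact (Finset.lt_inf'_iff _).mpr fun r _ => hη r
  · intro r a b hab
    exact hmain r a b (lt_of_lt_of_le hab (Finset.inf'_le _ (Finset.mem_univ r)))

/-- a δ-scrambled pair for the non-autonomous system `(X, F)` is an
η-scrambled pair for the autonomous system `(X, f)`, `f = f_k ∘ ⋯ ∘ f_1`, for some η > 0. -/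
theorem scrambledPair_nonautonomous_to_autonomous
    {X : Type*} [MetricSpace X] [CompactSpace X] {k : ℕ} (f : Fin (k + 1) → X → X)
    (hc : ∀ i, Continuous (f i)) (hs : ∀ i, Function.Surjective (f i))
    (x y : X) (δ : ℝ) (hδ : 0 < δ)
    (hinf : Filter.liminf (fun n : ℕ => dist (omegaIt f n x) (omegaIt f n y)) Filter.atTop = 0)
    (hsup : δ < Filter.limsup (fun n : ℕ => dist (omegaIt f n x) (omegaIt f n y)) Filter.atTop) :
    ∃ η > (0 : ℝ),
      Filter.liminf (fun n : ℕ =>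
        dist ((omegaIt f (k + 1))^[n] x) ((omegaIt f (k + 1))^[n] y)) Filter.atTop = 0 ∧
      η < Filter.limsup (fun n : ℕ =>
        dist ((omegaIt f (k + 1))^[n] x) ((omegaIt f (k + 1))^[n] y)) Filter.atTop := by
  -- notation
  set u : ℕ → ℝ := fun n => dist (omegaIt f n x) (omegaIt f n y) with hu_def
  set v : ℕ → ℝ := fun m =>
    dist ((omegaIt f (k + 1))^[m] x) ((omegaIt f (k + 1))^[m] y) with hv_def
  -- boundedness facts
  obtain ⟨C, hC⟩ := Metric.isBounded_iff.mp
    (Metric.isBounded_of_compactSpace (s := (Set.univ : Set X)))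
  have hCb : ∀ a b : X, dist a b ≤ C := fun a b => hC (Set.mem_univ a) (Set.mem_univ b)
  have hub : Filter.IsBoundedUnder (· ≤ ·) Filter.atTop u :=
    Filter.isBoundedUnder_of ⟨C, fun n => hCb _ _⟩
  have hvb : Filter.IsBoundedUnder (· ≤ ·) Filter.atTop v :=
    Filter.isBoundedUnder_of ⟨C, fun n => hCb _ _⟩
  have hug : Filter.IsBoundedUnder (· ≥ ·) Filter.atTop u :=
    Filter.isBoundedUnder_of ⟨0, fun n => dist_nonneg⟩
  have hvg : Filter.IsBoundedUnder (· ≥ ·) Filter.atTop v :=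
    Filter.isBoundedUnder_of ⟨0, fun n => dist_nonneg⟩
  -- Part 1 : liminf v = 0
  have hliminf : Filter.liminf v Filter.atTop = 0 := by
    refine le_antisymm ?_ (Filter.le_liminf_of_le hvb.isCoboundedUnder_ge
      (Filter.Eventually.of_forall fun n => dist_nonneg))
    refine le_of_forall_pos_le_add fun ε hε => ?_
    rw [zero_add]
    obtain ⟨η, hηpos, hη⟩ := unif_family
      (fun r : Fin (k + 1) => omegaFrom f r.1 (k + 1 - r.1))
      (fun r => continuous_omegaFrom hc _ _) hε
    have hfreq : ∃ᶠ n in Filter.atTop, u n < η :=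
      Filter.frequently_lt_of_liminf_lt hub.isCoboundedUnder_ge (by rw [hinf]; exact hηpos)
    have hfv : ∃ᶠ m in Filter.atTop, v m ≤ ε := by
      rw [Filter.frequently_atTop] at hfreq ⊢
      intro N
      obtain ⟨n, hn, hun⟩ := hfreq ((k + 1) * N)
      refine ⟨n / (k + 1) + 1, ?_, ?_⟩
      · have : N ≤ n / (k + 1) := Nat.le_div_iff_mul_le (Nat.succ_pos k) |>.mpr
          (by rw [Nat.mul_comm]; exact hn)
        omega
      · have hr : n % (k + 1) < k + 1 := Nat.mod_lt _ (Nat.succ_pos k)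
        have hx := omegaIt_complete f n x
        have hy := omegaIt_complete f n y
        simp only [hv_def]
        rw [hx, hy]
        exact le_of_lt (hη ⟨n % (k + 1), hr⟩ _ _ hun)
    exact Filter.liminf_le_of_frequently_le hfv hvg
  -- Part 2 : find η
  obtain ⟨η, hηpos, hη⟩ := unif_family
    (fun r : Fin (k + 1) => omegaIt f r.1) (fun r => continuous_omegaIt hc _) hδ
  have hfreq : ∃ᶠ n in Filter.atTop, δ < u n :=
    Filter.frequently_lt_of_lt_limsup hug.isCoboundedUnder_le hsup
  have hfv : ∃ᶠ m in Filter.atTop, η ≤ v m := by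
    rw [Filter.frequently_atTop] at hfreq ⊢
    intro N
    obtain ⟨n, hn, hun⟩ := hfreq ((k + 1) * N)
    refine ⟨n / (k + 1), ?_, ?_⟩
    · exact Nat.le_div_iff_mul_le (Nat.succ_pos k) |>.mpr (by rw [Nat.mul_comm]; exact hn)
    · by_contra hlt
      push_neg at hlt
      have hr : n % (k + 1) < k + 1 := Nat.mod_lt _ (Nat.succ_pos k)
      have hx := omegaIt_decomp f n x
      have hy := omegaIt_decomp f n y
      have : u n < δ := by
        simp only [hu_def]
        rw [hx, hy]
        exact hη ⟨n % (k + 1), hr⟩ _ _ hlt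
      linarith
  have hle : η ≤ Filter.limsup v Filter.atTop := Filter.le_limsup_of_frequently_le hfv hvb
  exact ⟨η / 2, by linarith, hliminf, lt_of_lt_of_le (by linarith) hle⟩
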